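/- arXiv:2402.11904 — 5 statements merged into one kernel-verified Lean document; each statement's English description precedes it below -/
import Mathlib

section
/- Let n ≥ 1, let W : ℝⁿ → ℝ be measurable and bounded, and let σ > 0. Then for every x ∈ ℝⁿ and every coordinate i, the partial derivative of the Gaussian smoothing W̃^σ with respect to xᵢ exists and equals ∂W̃^σ/∂xᵢ (x) = (1/σ) · ∫ W(x + σu) · uᵢ dγₙ(u), where uᵢ is the i-th coordinate of u. -/
/-!
Moving `x` along the `i`-th axis from `xᵢ` to `t` is the same as translating the Gaussian variable
`u` by `c = (t - xᵢ) / σ` along that axis. By the Cameron–Martin formula for the standard Gaussian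
on `ℝⁿ`, the smoothing becomes `∫ W(x + σu) exp(c uᵢ - c²/2) dγₙ(u)`, where `c` only enters the
smooth weight. Differentiating under the integral sign at `c = 0`, dominated by
`M (exp(2uᵢ) + exp(-2uᵢ))`, gives `∫ W(x + σu) uᵢ dγₙ(u)`, and the chain rule contributes `1/σ`.
-/

open MeasureTheory ProbabilityTheory Real

open scoped ENNReal

theorem MeasureTheory.Measure.pi_withDensity {ι : Type*} [Fintype ι] {X : ι → Type*}
    [∀ i, MeasurableSpace (X i)] {μ : ∀ i, Measure (X i)} [∀ i, IsProbabilityMeasure (μ i)]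
    {f : ∀ i, X i → ℝ≥0∞} (hf : ∀ i, Measurable (f i))
    [∀ i, SigmaFinite ((μ i).withDensity (f i))] :
    Measure.pi (fun i ↦ (μ i).withDensity (f i))
      = (Measure.pi μ).withDensity (fun x ↦ ∏ i, f i (x i)) := by
  refine Measure.pi_eq fun s hs ↦ ?_
  have h_ind : (Set.univ.pi s).indicator (fun x ↦ ∏ i, f i (x i))
      = fun x ↦ ∏ i, (s i).indicator (f i) (x i) := by
    funext x
    by_cases hx : x ∈ Set.univ.pi s
    · rw [Set.indicator_of_mem hx]
      exact Finset.prod_congr rfl fun i _ ↦ (Set.indicator_of_mem (hx i trivial) _).symm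
    · obtain ⟨i, hi⟩ : ∃ i, x i ∉ s i := by simpa [Set.mem_univ_pi] using hx
      rw [Set.indicator_of_notMem hx]
      exact (Finset.prod_eq_zero (Finset.mem_univ i) (Set.indicator_of_notMem hi _)).symm
  rw [withDensity_apply _ (MeasurableSet.univ_pi hs), ← lintegral_indicator
    (MeasurableSet.univ_pi hs), h_ind, lintegral_prod_eq_prod_lintegral_of_indepFun _ _
    (iIndepFun_pi fun i ↦ ((hf i).indicator (hs i)).aemeasurable)
    fun i ↦ ((hf i).indicator (hs i)).comp (measurable_pi_apply i)]
  refine Finset.prod_congr rfl fun i _ ↦ ?_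
  rw [withDensity_apply _ (hs i), ← lintegral_indicator (hs i),
    (measurePreserving_eval μ i).lintegral_comp ((hf i).indicator (hs i))]

lemma gaussianReal_eq_withDensity (m : ℝ) :
    gaussianReal m 1
      = (gaussianReal 0 1).withDensity fun y ↦ ENNReal.ofReal (exp (m * y - m ^ 2 / 2)) := by
  rw [gaussianReal_of_var_ne_zero _ one_ne_zero, gaussianReal_of_var_ne_zero _ one_ne_zero,
    ← withDensity_mul _ (measurable_gaussianPDF _ _) (by fun_prop)]
  congr 1 with y
  rw [Pi.mul_apply, gaussianPDF_def, gaussianPDF_def, ← ENNReal.ofReal_mul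
    (gaussianPDFReal_nonneg _ _ _)]
  simp only [gaussianPDFReal, NNReal.coe_one, mul_one, sub_zero, mul_assoc, ← exp_add]
  ring_nf

section StandardGaussianPi

variable {ι : Type*} [Fintype ι]

lemma map_add_pi_gaussianReal (m : ι → ℝ) :
    (Measure.pi fun _ : ι ↦ gaussianReal 0 1).map (· + m)
      = (Measure.pi fun _ : ι ↦ gaussianReal 0 1).withDensity
          fun u ↦ ENNReal.ofReal (exp (∑ j, (m j * u j - m j ^ 2 / 2))) := by
  have h_add : (· + m) = fun (u : ι → ℝ) j ↦ u j + m j := rfl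
  rw [h_add, Measure.pi_map_pi fun j ↦ (measurable_add_const (m j)).aemeasurable]
  have h_shift (j : ι) : (gaussianReal 0 1).map (· + m j) = (gaussianReal 0 1).withDensity
      fun y ↦ ENNReal.ofReal (exp (m j * y - m j ^ 2 / 2)) := by
    rw [gaussianReal_map_add_const, zero_add, gaussianReal_eq_withDensity]
  simp only [h_shift]
  rw [Measure.pi_withDensity fun j ↦ by fun_prop]
  congr 1 with u
  rw [exp_sum, ENNReal.ofReal_prod_of_nonneg fun j _ ↦ (exp_pos _).le]

variable {E : Type*} [NormedAddCommGroup E] [NormedSpace ℝ E]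

lemma integral_comp_add_pi_gaussianReal (m : ι → ℝ) (g : (ι → ℝ) → E) :
    ∫ u, g (u + m) ∂(Measure.pi fun _ : ι ↦ gaussianReal 0 1)
      = ∫ u, exp (∑ j, (m j * u j - m j ^ 2 / 2)) • g u
          ∂(Measure.pi fun _ : ι ↦ gaussianReal 0 1) := by
  rw [← MeasurableEmbedding.integral_map (f := (· + m))
    (MeasurableEquiv.addRight m).measurableEmbedding, map_add_pi_gaussianReal,
    integral_withDensity_eq_integral_toReal_smul (by fun_prop) (by simp)]
  simp only [ENNReal.toReal_ofReal (exp_pos _).le]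

lemma integral_comp_add_single_pi_gaussianReal [DecidableEq ι] (i : ι) (c : ℝ)
    (g : (ι → ℝ) → E) :
    ∫ u, g (u + Pi.single i c) ∂(Measure.pi fun _ : ι ↦ gaussianReal 0 1)
      = ∫ u, exp (c * u i - c ^ 2 / 2) • g u ∂(Measure.pi fun _ : ι ↦ gaussianReal 0 1) := by
  rw [integral_comp_add_pi_gaussianReal]
  congr with u
  rw [Finset.sum_eq_single i (fun j _ hj ↦ by simp [hj]) (by simp), Pi.single_eq_same]

end StandardGaussianPi

section DerivUnderIntegral

lemma abs_sub_mul_exp_le {y c : ℝ} (hc : |c| ≤ 1) :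
    |(y - c) * exp (c * y - c ^ 2 / 2)| ≤ exp (2 * y) + exp (-2 * y) := by
  have h_lin : |y - c| ≤ exp |y| := by
    linarith [abs_sub y c, add_one_le_exp |y|]
  have h_exp : exp (c * y - c ^ 2 / 2) ≤ exp |y| := by
    refine exp_le_exp.mpr ?_
    nlinarith [le_abs_self (c * y), abs_mul c y, abs_nonneg y, sq_nonneg c]
  have h_two : exp |y| * exp |y| ≤ exp (2 * y) + exp (-2 * y) := by
    rw [← exp_add]
    rcases abs_cases y with ⟨hy, -⟩ | ⟨hy, -⟩
    · rw [hy, ← two_mul]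
      linarith [exp_pos (-2 * y)]
    · rw [hy, ← two_mul, mul_neg, ← neg_mul]
      linarith [exp_pos (2 * y)]
  rw [abs_mul, abs_of_pos (exp_pos _)]
  exact (mul_le_mul h_lin h_exp (exp_pos _).le (exp_pos _).le).trans h_two

variable {α E : Type*} [MeasurableSpace α] [NormedAddCommGroup E] [NormedSpace ℝ E]

lemma hasDerivAt_integral_exp_mul_sub_sq_smul {μ : Measure α} {φ : α → ℝ} {g : α → E} {M : ℝ}
    (hφ : AEMeasurable φ μ) (hg : AEStronglyMeasurable g μ) (hgM : ∀ a, ‖g a‖ ≤ M)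
    (h_exp : ∀ t, Integrable (fun a ↦ exp (t * φ a)) μ) :
    HasDerivAt (fun c ↦ ∫ a, exp (c * φ a - c ^ 2 / 2) • g a ∂μ) (∫ a, φ a • g a ∂μ) 0 := by
  set F : ℝ → α → E := fun c a ↦ exp (c * φ a - c ^ 2 / 2) • g a
  set F' : ℝ → α → E := fun c a ↦ ((φ a - c) * exp (c * φ a - c ^ 2 / 2)) • g a
  have hF_meas (c : ℝ) : AEStronglyMeasurable (F c) μ := by fun_prop
  have hF_int : Integrable (F 0) μ := by
    refine ((h_exp 0).mul_const M).mono' (hF_meas 0) (ae_of_all _ fun a ↦ ?_)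
    simpa [F] using hgM a
  have h_bound : ∀ᵐ a ∂μ, ∀ c ∈ Metric.ball (0 : ℝ) 1,
      ‖F' c a‖ ≤ (exp (2 * φ a) + exp (-2 * φ a)) * M := by
    refine ae_of_all _ fun a c hc ↦ ?_
    rw [norm_smul, Real.norm_eq_abs]
    rw [Metric.mem_ball, Real.dist_eq, sub_zero] at hc
    exact mul_le_mul (abs_sub_mul_exp_le hc.le) (hgM a) (norm_nonneg _) (by positivity)
  have h_deriv : ∀ᵐ a ∂μ, ∀ c ∈ Metric.ball (0 : ℝ) 1,
      HasDerivAt (fun c ↦ F c a) (F' c a) c := by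
    refine ae_of_all _ fun a c _ ↦ ?_
    have h_arg : HasDerivAt (fun c ↦ c * φ a - c ^ 2 / 2) (φ a - c) c :=
      (((hasDerivAt_id c).mul_const (φ a)).sub ((hasDerivAt_pow 2 c).div_const 2)).congr_deriv
        (by norm_num)
    exact (h_arg.exp.smul_const (g a)).congr_deriv (by rw [mul_comm])
  convert (hasDerivAt_integral_of_dominated_loc_of_deriv_le (Metric.ball_mem_nhds 0 one_pos)
    (.of_forall hF_meas) hF_int (by fun_prop) h_bound
    (((h_exp 2).add (h_exp (-2))).mul_const M) h_deriv).2 using 3 with a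
  simp [F']

end DerivUnderIntegral

lemma update_add_smul_eq_add_smul_add_single {ι : Type*} [DecidableEq ι] (x u : ι → ℝ) (i : ι)
    (t : ℝ) {σ : ℝ} (hσ : σ ≠ 0) :
    Function.update x i t + σ • u = x + σ • (u + Pi.single i ((t - x i) / σ)) := by
  ext j
  rcases eq_or_ne j i with rfl | hj
  · simp only [Pi.add_apply, Function.update_self, Pi.smul_apply, smul_eq_mul, smul_add,
      Pi.single_eq_same]
    field_simp
    ring
  · simp [hj]

theorem gaussian_smoothing_partial_deriv_general
    (n : ℕ)
    (W : (Fin n → ℝ) → ℝ) (hW : Measurable W)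
    (M : ℝ) (hM : ∀ x, |W x| ≤ M)
    (σ : ℝ) (hσ : 0 < σ)
    (γ : Measure (Fin n → ℝ))
    (hγ : γ = Measure.pi fun _ : Fin n => gaussianReal 0 1)
    (x : Fin n → ℝ) (i : Fin n) :
    HasDerivAt (fun t : ℝ => ∫ u, W (Function.update x i t + σ • u) ∂γ)
      ((1 / σ) * ∫ u, W (x + σ • u) * u i ∂γ) (x i) := by
  subst hγ
  set γ := Measure.pi fun _ : Fin n ↦ gaussianReal 0 1
  set c : ℝ → ℝ := fun t ↦ (t - x i) / σ
  have h_smooth : (fun t ↦ ∫ u, W (Function.update x i t + σ • u) ∂γ)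
      = (fun s ↦ ∫ u, exp (s * u i - s ^ 2 / 2) • W (x + σ • u) ∂γ) ∘ c := by
    funext t
    simp only [Function.comp, update_add_smul_eq_add_smul_add_single x _ i t hσ.ne']
    exact integral_comp_add_single_pi_gaussianReal i (c t) fun u ↦ W (x + σ • u)
  have h_c : HasDerivAt c (1 / σ) (x i) := by
    simpa using ((hasDerivAt_id (x i)).sub_const (x i)).div_const σ
  have h_tilt : HasDerivAt (fun s ↦ ∫ u, exp (s * u i - s ^ 2 / 2) • W (x + σ • u) ∂γ)
      (∫ u, u i • W (x + σ • u) ∂γ) (c (x i)) := by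
    rw [show c (x i) = 0 by simp [c]]
    exact hasDerivAt_integral_exp_mul_sub_sq_smul (measurable_pi_apply i).aemeasurable
      (hW.comp (by fun_prop)).aestronglyMeasurable (fun u ↦ hM _)
      fun t ↦ integrable_comp_eval (μ := fun _ : Fin n ↦ gaussianReal 0 1) (i := i)
        (integrable_exp_mul_gaussianReal t)
  rw [h_smooth]
  refine (h_tilt.comp (x i) h_c).congr_deriv ?_
  rw [mul_comm]
  congr 1
  exact integral_congr_ae (ae_of_all _ fun u ↦ mul_comm _ _)

/-- For `n ≥ 1`, a measurable bounded `W : ℝⁿ → ℝ` and `σ > 0`, the partial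
derivative of the Gaussian smoothing `W̃^σ(x) = ∫ W(x + σu) dγₙ(u)` with respect to the `i`-th
coordinate exists at every `x` and equals `(1/σ) * ∫ W(x + σu) * uᵢ dγₙ(u)`. -/
theorem gaussian_smoothing_partial_deriv
    (n : ℕ) (hn : 1 ≤ n)
    (W : (Fin n → ℝ) → ℝ) (hW : Measurable W)
    (M : ℝ) (hM : ∀ x, |W x| ≤ M)
    (σ : ℝ) (hσ : 0 < σ)
    (γ : Measure (Fin n → ℝ))
    (hγ : γ = Measure.pi fun _ : Fin n => gaussianReal 0 1)
    (x : Fin n → ℝ) (i : Fin n) :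
    HasDerivAt (fun t : ℝ => ∫ u, W (Function.update x i t + σ • u) ∂γ)
      ((1 / σ) * ∫ u, W (x + σ • u) * u i ∂γ) (x i) :=
  gaussian_smoothing_partial_deriv_general n W hW M hM σ hσ γ hγ x i
end

section
/- Let M̂ be defined recursively by M̂(1, S) := f 1 (S) and, for 2 ≤ i ≤ n, M̂(i, S) := max over B ⊆ S of (M̂(i − 1, S \ B) + f i (B)). Then the maximum over all S ⊆ Fin m of M̂(n, S) equals the maximum, over all tuples (A₁, …, Aₙ) of pairwise disjoint bundles Aᵢ ⊆ Fin m (not required to cover all items), of Σ_{i=1}^{n} f i (A i). That is, the dynamic program correctly computes the maximum affine welfare over all allocations. -/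
/-!
By induction on `i`, `M̂(i, S)` is the largest welfare of an allocation of *exactly* the items
of `S` to the first `i` bidders (exact cover is what makes the base case `M̂(1, S) = f 1 (S)`
right): such an allocation is the last bidder's bundle `B ⊆ S` together with an allocation of
exactly `S \ B` to the others. Every pairwise disjoint allocation covers exactly some `S`, so
maximizing over `S` ranges over all allocations.
-/

open Finset

theorem Fin.sup_univ_castSucc {β : Type*} [SemilatticeSup β] [OrderBot β] {k : ℕ}
    (A : Fin (k + 1) → β) :
    univ.sup A = univ.sup (fun j : Fin k => A j.castSucc) ⊔ A (Fin.last k) := by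
  rw [Fin.univ_castSuccEmb, sup_cons, sup_map, sup_comm]
  rfl

namespace AffineWelfare

variable {α : Type*} [DecidableEq α]

/-- Allocations of exactly the items of `S` to `k` labelled bidders; bundles may be empty. -/
def allocations (k : ℕ) (S : Finset α) : Finset (Fin k → Finset α) :=
  (Fintype.piFinset fun _ => S.powerset).filter fun A =>
    (∀ i j, i ≠ j → Disjoint (A i) (A j)) ∧ univ.sup A = S

theorem mem_allocations {k : ℕ} {S : Finset α} {A : Fin k → Finset α} :
    A ∈ allocations k S ↔ (∀ i j, i ≠ j → Disjoint (A i) (A j)) ∧ univ.sup A = S := by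
  simp only [allocations, mem_filter, Fintype.mem_piFinset, mem_powerset, and_iff_right_iff_imp]
  rintro ⟨-, rfl⟩ j
  exact le_sup (mem_univ j)

theorem allocations_nonempty (k : ℕ) [NeZero k] (S : Finset α) :
    (allocations k S).Nonempty := by
  refine ⟨fun j => if j = 0 then S else ∅, mem_allocations.2 ⟨fun i j hij => ?_, ?_⟩⟩
  · by_cases hi : i = 0
    · simp [hi, Ne.symm (hi ▸ hij)]
    · simp [hi]
  · refine le_antisymm (Finset.sup_le fun j _ => ?_) (le_sup_of_le (mem_univ 0) (by simp))
    split_ifs <;> simp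

theorem allocations_one (S : Finset α) : allocations 1 S = {fun _ => S} := by
  ext A
  simp only [mem_allocations, mem_singleton, univ_unique, sup_singleton, funext_iff,
    Fin.forall_fin_one, Fin.default_eq_zero]
  exact ⟨And.right, fun h => ⟨fun h0 => absurd rfl h0, h⟩⟩

theorem snoc_mem_allocations {k : ℕ} {S B : Finset α} {A : Fin k → Finset α} (hB : B ⊆ S)
    (hA : A ∈ allocations k (S \ B)) : Fin.snoc A B ∈ allocations (k + 1) S := by
  obtain ⟨hdisj, hsup⟩ := mem_allocations.1 hA
  have hAB (j : Fin k) : Disjoint (A j) B :=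
    sdiff_disjoint.mono_left (hsup ▸ le_sup (f := A) (mem_univ j) : A j ⊆ S \ B)
  refine mem_allocations.2 ⟨fun i j hij => ?_, ?_⟩
  · induction i using Fin.lastCases <;> induction j using Fin.lastCases <;>
      simp only [Fin.snoc_last, Fin.snoc_castSucc] at hij ⊢
    · exact absurd rfl hij
    · exact (hAB _).symm
    · exact hAB _
    · exact hdisj _ _ fun h => hij (congrArg _ h)
  · rw [Fin.sup_univ_castSucc]
    simp only [Fin.snoc_castSucc, Fin.snoc_last, hsup]
    exact sdiff_union_of_subset hB

theorem init_mem_allocations {k : ℕ} {S : Finset α} {A : Fin (k + 1) → Finset α}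
    (hA : A ∈ allocations (k + 1) S) : Fin.init A ∈ allocations k (S \ A (Fin.last k)) := by
  obtain ⟨hdisj, hsup⟩ := mem_allocations.1 hA
  refine mem_allocations.2 ⟨fun i j hij => hdisj _ _ (Fin.castSucc_injective k |>.ne hij), ?_⟩
  rw [← hsup, Fin.sup_univ_castSucc]
  refine (Disjoint.sup_sdiff_cancel_right ?_).symm
  exact Finset.disjoint_sup_left.2 fun j _ => hdisj _ _ (Fin.castSucc_ne_last j)

theorem last_subset_of_mem_allocations {k : ℕ} {S : Finset α} {A : Fin (k + 1) → Finset α}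
    (hA : A ∈ allocations (k + 1) S) : A (Fin.last k) ⊆ S :=
  (mem_allocations.1 hA).2 ▸ le_sup (f := A) (mem_univ _)

def maxWelfare {k : ℕ} [NeZero k] (v : Fin k → Finset α → ℝ) (S : Finset α) : ℝ :=
  (allocations k S).sup' (allocations_nonempty k S) fun A => ∑ j, v j (A j)

theorem maxWelfare_one (v : Fin 1 → Finset α → ℝ) (S : Finset α) :
    maxWelfare v S = v 0 S := by
  simp [maxWelfare, allocations_one]

theorem maxWelfare_succ {k : ℕ} [NeZero k] (v : Fin (k + 1) → Finset α → ℝ) (S : Finset α) :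
    maxWelfare v S = S.powerset.sup' (powerset_nonempty S) fun B =>
      maxWelfare (fun j => v j.castSucc) (S \ B) + v (Fin.last k) B := by
  refine le_antisymm (sup'_le _ _ fun A hA => ?_) (sup'_le _ _ fun B hB => ?_)
  · refine le_sup'_of_le _ (mem_powerset.2 (last_subset_of_mem_allocations hA)) ?_
    rw [Fin.sum_univ_castSucc]
    exact add_le_add_left
      (le_sup' (fun A => ∑ j, v j.castSucc (A j)) (init_mem_allocations hA)) _
  · rw [maxWelfare, sup'_add]
    refine sup'_le _ _ fun A hA => ?_
    refine le_sup'_of_le _ (snoc_mem_allocations (mem_powerset.1 hB) hA) (le_of_eq ?_)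
    simp [Fin.sum_univ_castSucc]

theorem biUnion_allocations [Fintype α] (k : ℕ) :
    (univ : Finset (Finset α)).biUnion (allocations k) =
      univ.filter fun A : Fin k → Finset α => ∀ i j, i ≠ j → Disjoint (A i) (A j) := by
  ext A
  simp [mem_allocations]

theorem sup'_maxWelfare [Fintype α] {k : ℕ} [NeZero k] (v : Fin k → Finset α → ℝ) :
    univ.sup' univ_nonempty (maxWelfare v) =
      (univ.filter fun A : Fin k → Finset α => ∀ i j, i ≠ j → Disjoint (A i) (A j)).sup'
        ⟨fun _ => ∅, by simp⟩ fun A => ∑ j, v j (A j) := by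
  unfold maxWelfare
  rw [← sup'_biUnion]
  exact sup'_congr _ (biUnion_allocations k) fun _ _ => rfl

theorem dp_eq_maxWelfare {n : ℕ} (hn : 0 < n) (f : Fin n → Finset α → ℝ)
    (Mhat : ℕ → Finset α → ℝ) (hbase : ∀ S, Mhat 1 S = f ⟨0, hn⟩ S)
    (hrec : ∀ (i : ℕ) (hi : i + 1 < n) (S : Finset α), Mhat (i + 2) S =
      S.powerset.sup' (powerset_nonempty S) fun B => Mhat (i + 1) (S \ B) + f ⟨i + 1, hi⟩ B)
    (k : ℕ) (hk : k + 1 ≤ n) (S : Finset α) :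
    Mhat (k + 1) S = maxWelfare (fun j => f (Fin.castLE hk j)) S := by
  induction k generalizing S with
  | zero => rw [hbase, maxWelfare_one]; rfl
  | succ k ih => rw [hrec k hk, maxWelfare_succ]; simp only [ih (Nat.le_of_succ_le hk)]; rfl

end AffineWelfare

open AffineWelfare in
/-- Let `M̂` be defined recursively by `M̂(1, S) = f 1 (S)` and, for `2 ≤ i ≤ n`,
`M̂(i, S) = max_{B ⊆ S} (M̂(i − 1, S \ B) + f i (B))`. Then `max_{S ⊆ [m]} M̂(n, S)` equals the
maximum, over all tuples `(A₁, …, Aₙ)` of pairwise disjoint bundles, of `Σ_{i=1}^{n} f i (A i)`: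
the dynamic program computes the maximum affine welfare over all allocations. -/
theorem dp_computes_max_affine_welfare (n m : ℕ) (hn : 1 ≤ n)
    (f : Fin n → Finset (Fin m) → ℝ)
    (Mhat : ℕ → Finset (Fin m) → ℝ)
    (hbase : ∀ S : Finset (Fin m), Mhat 1 S = f ⟨0, hn⟩ S)
    (hrec : ∀ (i : ℕ) (h2 : 2 ≤ i) (hin : i ≤ n), ∀ S : Finset (Fin m),
      Mhat i S = S.powerset.sup' (Finset.powerset_nonempty S)
        (fun B => Mhat (i - 1) (S \ B) + f ⟨i - 1, by omega⟩ B)) :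
    (Finset.univ : Finset (Finset (Fin m))).sup' ⟨∅, Finset.mem_univ ∅⟩ (Mhat n) =
      ((Finset.univ : Finset (Fin n → Finset (Fin m))).filter
          (fun A => ∀ j k : Fin n, j ≠ k → Disjoint (A j) (A k))).sup'
        ⟨fun _ => ∅, by simp⟩ (fun A => ∑ i, f i (A i)) := by
  obtain ⟨k, rfl⟩ := Nat.exists_eq_add_of_le' hn
  have hdp : Mhat (k + 1) = maxWelfare f := funext fun S => by
    simpa using dp_eq_maxWelfare hn f Mhat hbase (fun i hi => hrec (i + 2) (by omega) hi) k le_rfl S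
  rw [hdp, sup'_maxWelfare]
end

section
/- (AMA is dominant strategy incentive compatible.) Fix a bidder i, her true valuation vᵢ : Finset (Fin m) → ℝ, bids b_{-i} of the other bidders, and an arbitrary misreport bᵢ' : Finset (Fin m) → ℝ. Let b be the truthful profile in which bidder i bids vᵢ and the others bid b_{-i}, and let b' be the profile in which bidder i bids bᵢ' and the others bid b_{-i}. Then for every allocation A* maximizing AW(b, ·) over Alloc and every allocation A' maximizing AW(b', ·) over Alloc, the truthful utility dominates: vᵢ(A* i) − pᵢ(b, A*) ≥ vᵢ(A' i) − pᵢ(b', A'). -/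
open Finset

noncomputable section

/-- The finite set of allocations: functions assigning each bidder a bundle of items,
with pairwise disjoint bundles. -/
def Alloc (n m : ℕ) : Finset (Fin n → Finset (Fin m)) :=
  Finset.univ.filter fun A => ∀ j k : Fin n, j ≠ k → Disjoint (A j) (A k)

lemma Alloc_nonempty (n m : ℕ) : (Alloc n m).Nonempty :=
  ⟨fun _ => ∅, by simp [Alloc]⟩

/-- Affine welfare of allocation `A` under bid profile `b`. -/
def AW {n m : ℕ} (w : Fin n → ℝ) (lam : (Fin n → Finset (Fin m)) → ℝ)
    (b : Fin n → Finset (Fin m) → ℝ) (A : Fin n → Finset (Fin m)) : ℝ :=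
  (∑ i, w i * b i (A i)) + lam A

/-- Affine welfare of allocation `A` under bid profile `b`, excluding bidder `i`. -/
def AWmi {n m : ℕ} (w : Fin n → ℝ) (lam : (Fin n → Finset (Fin m)) → ℝ)
    (b : Fin n → Finset (Fin m) → ℝ) (i : Fin n) (A : Fin n → Finset (Fin m)) : ℝ :=
  (∑ j ∈ Finset.univ.erase i, w j * b j (A j)) + lam A

/-- AMA payment of bidder `i` under bid profile `b`, given winning allocation `Astar`. -/
def pay {n m : ℕ} (w : Fin n → ℝ) (lam : (Fin n → Finset (Fin m)) → ℝ)
    (b : Fin n → Finset (Fin m) → ℝ) (i : Fin n) (Astar : Fin n → Finset (Fin m)) : ℝ :=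
  (1 / w i) * ((Alloc n m).sup' (Alloc_nonempty n m) (AWmi w lam b i) - AWmi w lam b i Astar)

end

/-! Bidder `i`'s report does not enter `AWmi · i`, so the maximum in her payment does not
depend on it, and `w i` times her utility at an allocation `A` is the truthful affine welfare
of `A` minus that constant. The truthful maximizer therefore beats every allocation. -/

lemma AWmi_update_self {n m : ℕ} (w : Fin n → ℝ) (lam : (Fin n → Finset (Fin m)) → ℝ)
    (b : Fin n → Finset (Fin m) → ℝ) (i : Fin n) (f : Finset (Fin m) → ℝ)
    (A : Fin n → Finset (Fin m)) :
    AWmi w lam (Function.update b i f) i A = AWmi w lam b i A := by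
  unfold AWmi
  congr 1
  exact Finset.sum_congr rfl fun j hj => by
    rw [Function.update_of_ne (Finset.ne_of_mem_erase hj)]

lemma AW_update_eq {n m : ℕ} (w : Fin n → ℝ) (lam : (Fin n → Finset (Fin m)) → ℝ)
    (b : Fin n → Finset (Fin m) → ℝ) (i : Fin n) (f : Finset (Fin m) → ℝ)
    (A : Fin n → Finset (Fin m)) :
    AW w lam (Function.update b i f) A = w i * f (A i) + AWmi w lam b i A := by
  rw [← AWmi_update_self w lam b i f, AWmi, AW, ← Finset.add_sum_erase _ _ (Finset.mem_univ i),
    Function.update_self, add_assoc]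

lemma mul_sub_pay_update {n m : ℕ} (w : Fin n → ℝ) (lam : (Fin n → Finset (Fin m)) → ℝ)
    (b : Fin n → Finset (Fin m) → ℝ) (i : Fin n) (hwi : w i ≠ 0)
    (v f : Finset (Fin m) → ℝ)
    (A : Fin n → Finset (Fin m)) :
    w i * (v (A i) - pay w lam (Function.update b i f) i A) =
      AW w lam (Function.update b i v) A -
        (Alloc n m).sup' (Alloc_nonempty n m) (AWmi w lam b i) := by
  have hsup : (Alloc n m).sup' (Alloc_nonempty n m) (AWmi w lam (Function.update b i f) i) =
      (Alloc n m).sup' (Alloc_nonempty n m) (AWmi w lam b i) :=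
    Finset.sup'_congr _ rfl fun A _ => AWmi_update_self w lam b i f A
  rw [pay, hsup, AWmi_update_self, AW_update_eq, mul_sub, ← mul_assoc, mul_one_div_cancel hwi]
  ring

theorem AMA_DSIC_general {n m : ℕ} (w : Fin n → ℝ) (hw : ∀ i, 0 < w i)
    (lam : (Fin n → Finset (Fin m)) → ℝ) (i : Fin n)
    (vi : Finset (Fin m) → ℝ) (bmi : Fin n → Finset (Fin m) → ℝ)
    (bi' : Finset (Fin m) → ℝ)
    (Astar : Fin n → Finset (Fin m))
    (hmax : ∀ A ∈ Alloc n m,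
      AW w lam (Function.update bmi i vi) A ≤ AW w lam (Function.update bmi i vi) Astar)
    (A' : Fin n → Finset (Fin m)) (hA' : A' ∈ Alloc n m) :
    vi (Astar i) - pay w lam (Function.update bmi i vi) i Astar ≥
      vi (A' i) - pay w lam (Function.update bmi i bi') i A' := by
  refine le_of_mul_le_mul_left ?_ (hw i)
  rw [mul_sub_pay_update w lam bmi i (hw i).ne', mul_sub_pay_update w lam bmi i (hw i).ne']
  exact sub_le_sub_right (hmax A' hA') _

/-- **AMA is DSIC.** For bidder `i` with true valuation `vi`, others' bids `bmi`,
and any misreport `bi'`, the truthful utility (under any maximizer of the truthful profile)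
dominates the misreport utility (under any maximizer of the misreport profile). -/
theorem AMA_DSIC {n m : ℕ} (w : Fin n → ℝ) (hw : ∀ i, 0 < w i)
    (lam : (Fin n → Finset (Fin m)) → ℝ) (i : Fin n)
    (vi : Finset (Fin m) → ℝ) (bmi : Fin n → Finset (Fin m) → ℝ)
    (bi' : Finset (Fin m) → ℝ)
    (Astar : Fin n → Finset (Fin m)) (hAstar : Astar ∈ Alloc n m)
    (hmax : ∀ A ∈ Alloc n m,
      AW w lam (Function.update bmi i vi) A ≤ AW w lam (Function.update bmi i vi) Astar)
    (A' : Fin n → Finset (Fin m)) (hA' : A' ∈ Alloc n m)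
    (hmax' : ∀ A ∈ Alloc n m,
      AW w lam (Function.update bmi i bi') A ≤ AW w lam (Function.update bmi i bi') A') :
    vi (Astar i) - pay w lam (Function.update bmi i vi) i Astar ≥
      vi (A' i) - pay w lam (Function.update bmi i bi') i A' :=
  AMA_DSIC_general w hw lam i vi bmi bi' Astar hmax A' hA'
end

section
/- (Truthful utility formula, independent of tie-breaking.) Fix a bidder i, her true valuation vᵢ, and bids b_{-i} of the other bidders, and let b be the truthful profile in which bidder i bids vᵢ and the others bid b_{-i}. Then for every allocation A* maximizing AW(b, ·) over Alloc, bidder i's truthful utility equals vᵢ(A* i) − pᵢ(b, A*) = (1 / w i) * ((max over A ∈ Alloc of AW(b, A)) − (max over A ∈ Alloc of AW₋ᵢ(b, A))); in particular this value does not depend on which maximizer A* is selected. -/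
open Finset

/-!
A maximizer `A*` attains `max_A AW(b, A) = AW(b, A*) = w i * b i (A* i) + AW₋ᵢ(b, A*)`, so the term
`AW₋ᵢ(b, A*)` in the payment cancels, and with it the only dependence on the choice of maximizer.
-/

section AffineWelfare

variable {n m : ℕ} (w : Fin n → ℝ) (lam : (Fin n → Finset (Fin m)) → ℝ)
  (b : Fin n → Finset (Fin m) → ℝ)

theorem AW_eq_mul_add_AWmi (i : Fin n) (A : Fin n → Finset (Fin m)) :
    AW w lam b A = w i * b i (A i) + AWmi w lam b i A := by
  rw [AW, AWmi, ← Finset.add_sum_erase _ _ (Finset.mem_univ i), add_assoc]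

theorem sup'_AW_eq_of_forall_le {Astar : Fin n → Finset (Fin m)} (hAstar : Astar ∈ Alloc n m)
    (hmax : ∀ A ∈ Alloc n m, AW w lam b A ≤ AW w lam b Astar) :
    (Alloc n m).sup' (Alloc_nonempty n m) (AW w lam b) = AW w lam b Astar :=
  le_antisymm (Finset.sup'_le _ _ hmax) (Finset.le_sup' _ hAstar)

theorem sub_pay_eq_of_forall_le {i : Fin n} (hwi : w i ≠ 0) {Astar : Fin n → Finset (Fin m)}
    (hAstar : Astar ∈ Alloc n m) (hmax : ∀ A ∈ Alloc n m, AW w lam b A ≤ AW w lam b Astar) :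
    b i (Astar i) - pay w lam b i Astar =
      (1 / w i) * ((Alloc n m).sup' (Alloc_nonempty n m) (AW w lam b) -
        (Alloc n m).sup' (Alloc_nonempty n m) (AWmi w lam b i)) := by
  rw [sup'_AW_eq_of_forall_le w lam b hAstar hmax, AW_eq_mul_add_AWmi w lam b i, pay]
  field_simp
  ring

end AffineWelfare

/-- **Truthful utility formula.** Under truthful bidding, for every winning
allocation `Astar`, bidder `i`'s utility equals
`(1 / w i) * (max_A AW(b, A) − max_A AW₋ᵢ(b, A))`, independently of the tie-breaking. -/
theorem AMA_truthful_utility_formula {n m : ℕ} (w : Fin n → ℝ) (hw : ∀ i, 0 < w i)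
    (lam : (Fin n → Finset (Fin m)) → ℝ) (i : Fin n)
    (vi : Finset (Fin m) → ℝ) (bmi : Fin n → Finset (Fin m) → ℝ)
    (Astar : Fin n → Finset (Fin m)) (hAstar : Astar ∈ Alloc n m)
    (hmax : ∀ A ∈ Alloc n m,
      AW w lam (Function.update bmi i vi) A ≤ AW w lam (Function.update bmi i vi) Astar) :
    vi (Astar i) - pay w lam (Function.update bmi i vi) i Astar =
      (1 / w i) *
        ((Alloc n m).sup' (Alloc_nonempty n m) (AW w lam (Function.update bmi i vi)) -
          (Alloc n m).sup' (Alloc_nonempty n m) (AWmi w lam (Function.update bmi i vi) i)) := by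
  simpa only [Function.update_self] using
    sub_pay_eq_of_forall_le w lam (Function.update bmi i vi) (hw i).ne' hAstar hmax
end

section
/- (Revenue decomposition R = Z + F.) Let v be a valuation profile and A* any allocation maximizing AW(v, ·) over Alloc. Then the total AMA revenue decomposes as Σ_{i} pᵢ(v, A*) = (Σ_{i} v i (A* i)) + (Σ_{i} (1 / w i) * (max over A ∈ Alloc of AW₋ᵢ(v, A))) − ((Σ_{i} 1 / w i) * (max over A ∈ Alloc of AW(v, A))), i.e., the revenue equals the social welfare of the winning allocation plus the continuous component F. -/
open Finset

/- Bidder `i`'s payment is `(1/wᵢ)(max AW₋ᵢ − AW₋ᵢ(A*))`, and `AW₋ᵢ(A*) = AW(A*) − wᵢ vᵢ(A*ᵢ)`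
with `AW(A*) = max AW`. Hence `pᵢ = vᵢ(A*ᵢ) + (1/wᵢ) max AW₋ᵢ − (1/wᵢ) max AW`, and summing over
the bidders gives the decomposition. -/

lemma AWmi_eq_AW_sub {n m : ℕ} (w : Fin n → ℝ) (lam : (Fin n → Finset (Fin m)) → ℝ)
    (b : Fin n → Finset (Fin m) → ℝ) (i : Fin n) (A : Fin n → Finset (Fin m)) :
    AWmi w lam b i A = AW w lam b A - w i * b i (A i) := by
  have hsplit := Finset.sum_erase_add Finset.univ (fun j => w j * b j (A j)) (Finset.mem_univ i)
  simp only [AWmi, AW]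
  linarith

lemma pay_eq_add_sub {n m : ℕ} {w : Fin n → ℝ} (lam : (Fin n → Finset (Fin m)) → ℝ)
    (b : Fin n → Finset (Fin m) → ℝ) {i : Fin n} (hwi : w i ≠ 0) (A : Fin n → Finset (Fin m)) :
    pay w lam b i A = b i (A i) +
      (1 / w i) * (Alloc n m).sup' (Alloc_nonempty n m) (AWmi w lam b i) -
      (1 / w i) * AW w lam b A := by
  rw [pay, AWmi_eq_AW_sub]
  field_simp
  ring

/-- **Revenue decomposition `R = Z + F`.** For a valuation profile `v` and any
allocation `Astar` maximizing `AW(v, ·)`, the total AMA revenue equals the social welfare of the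
winning allocation plus the continuous component `F`:
`Σᵢ pᵢ(v, A*) = Σᵢ v i (A* i) + Σᵢ (1/wᵢ) maxₐ AW₋ᵢ(v, A) − (Σᵢ 1/wᵢ) maxₐ AW(v, A)`. -/
theorem AMA_revenue_decomposition {n m : ℕ} (w : Fin n → ℝ) (hw : ∀ i, 0 < w i)
    (lam : (Fin n → Finset (Fin m)) → ℝ)
    (v : Fin n → Finset (Fin m) → ℝ)
    (Astar : Fin n → Finset (Fin m)) (hAstar : Astar ∈ Alloc n m)
    (hmax : ∀ A ∈ Alloc n m, AW w lam v A ≤ AW w lam v Astar) :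
    ∑ i, pay w lam v i Astar =
      (∑ i, v i (Astar i)) +
        (∑ i, (1 / w i) * (Alloc n m).sup' (Alloc_nonempty n m) (AWmi w lam v i)) -
        (∑ i, 1 / w i) * (Alloc n m).sup' (Alloc_nonempty n m) (AW w lam v) := by
  have hsup : (Alloc n m).sup' (Alloc_nonempty n m) (AW w lam v) = AW w lam v Astar :=
    le_antisymm (Finset.sup'_le _ _ hmax) (Finset.le_sup' _ hAstar)
  rw [hsup, Finset.sum_mul,
    Finset.sum_congr rfl fun i _ => pay_eq_add_sub lam v (hw i).ne' Astar,
    Finset.sum_sub_distrib, Finset.sum_add_distrib]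
end
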